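/- Let p_max = max_j p_j and S = {j : p_j = p_max}. Then the probability that the answer returned by the majority-vote procedure lies in S, i.e., Σ_{l ∈ S} Pr(a_l | p; N), tends to 1 as N → ∞. -/

import Mathlib

/-!
Exponential tilting. Let `p l < p j`. For `t ≥ 1`, whenever `l` is among the most frequent
answers the factor `t ^ count l / t ^ count j` is at least `1`, so the probability of returning
`l` is at most the expectation of that factor,
`(∑ a, p a · t^[a = l] · t⁻¹^[a = j]) ^ N = (1 + (t - 1) (p l - p j / t)) ^ N`.
Choosing `t > 1` with `p j / t` the midpoint of `p l` and `p j` makes the base `< 1`, so every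
answer outside `S` is returned with exponentially small probability, while the return
probabilities of all answers sum to `1`.
-/

open Finset Filter

/-- Number of the `N` samples in `ω` equal to answer `j`. -/
def count {m N : ℕ} (ω : Fin N → Fin m) (j : Fin m) : ℕ :=
  (Finset.univ.filter fun i => ω i = j).card

/-- The set `J(ω)` of answers achieving the maximal count among the samples `ω`. -/
def maxSet {m N : ℕ} (ω : Fin N → Fin m) : Finset (Fin m) :=
  Finset.univ.filter fun j => ∀ k, count ω k ≤ count ω j

/-- Majority-vote probability that answer `l` is returned after `N` i.i.d. samples
drawn from `p`: the most frequent answer is chosen, ties broken uniformly. -/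
noncomputable def majorityProb {m : ℕ} (p : Fin m → ℝ) (N : ℕ) (l : Fin m) : ℝ :=
  ∑ ω : Fin N → Fin m, (∏ i, p (ω i)) *
    (if l ∈ maxSet ω then (1 : ℝ) / ((maxSet ω).card : ℝ) else 0)

section Counting

variable {m N : ℕ}

lemma maxSet_nonempty [NeZero m] (ω : Fin N → Fin m) : (maxSet ω).Nonempty := by
  obtain ⟨j, -, hj⟩ := exists_max_image univ (count ω) univ_nonempty
  exact ⟨j, by simpa [maxSet] using hj⟩

lemma count_le_of_mem_maxSet {ω : Fin N → Fin m} {l : Fin m} (hl : l ∈ maxSet ω) (j : Fin m) :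
    count ω j ≤ count ω l :=
  (mem_filter.mp hl).2 j

lemma prod_ite_eq_pow_count {M : Type*} [CommMonoid M] (ω : Fin N → Fin m) (j : Fin m)
    (x : M) : ∏ i, (if ω i = j then x else 1) = x ^ count ω j := by
  rw [prod_ite, prod_const_one, mul_one, prod_const, count]

end Counting

section MajorityProb

variable {m : ℕ} {p : Fin m → ℝ}

lemma majorityProb_nonneg (hnn : ∀ j, 0 ≤ p j) (N : ℕ) (l : Fin m) :
    0 ≤ majorityProb p N l :=
  sum_nonneg fun _ _ => mul_nonneg (prod_nonneg fun _ _ => hnn _) (by positivity)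

lemma sum_majorityProb [NeZero m] (N : ℕ) :
    ∑ l, majorityProb p N l = (∑ j, p j) ^ N := by
  have tie_break : ∀ ω : Fin N → Fin m,
      ∑ l, (if l ∈ maxSet ω then (1 : ℝ) / (maxSet ω).card else 0) = 1 := by
    intro ω
    have : ((maxSet ω).card : ℝ) ≠ 0 := by exact_mod_cast (maxSet_nonempty ω).card_pos.ne'
    rw [sum_ite_mem, univ_inter, sum_const, nsmul_eq_mul, mul_one_div_cancel this]
  simp only [majorityProb]
  rw [sum_comm, Fintype.sum_pow]
  exact sum_congr rfl fun ω _ => by rw [← mul_sum, tie_break, mul_one]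

noncomputable def tilt (p : Fin m → ℝ) (l j : Fin m) (t : ℝ) (a : Fin m) : ℝ :=
  p a * (if a = l then t else 1) * (if a = j then t⁻¹ else 1)

lemma majorityProb_le_sum_tilt_pow (hnn : ∀ j, 0 ≤ p j) {t : ℝ} (ht : 1 ≤ t) (N : ℕ)
    (l j : Fin m) : majorityProb p N l ≤ (∑ a, tilt p l j t a) ^ N := by
  rw [Fintype.sum_pow]
  refine sum_le_sum fun ω _ => ?_
  have hp : 0 ≤ ∏ i, p (ω i) := prod_nonneg fun _ _ => hnn _
  have tilt_prod :
      ∏ i, tilt p l j t (ω i) = (∏ i, p (ω i)) * (t ^ count ω l / t ^ count ω j) := by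
    simp only [tilt, prod_mul_distrib, prod_ite_eq_pow_count, inv_pow, div_eq_mul_inv, mul_assoc]
  rw [tilt_prod]
  split_ifs with hl
  · have hcard : (1 : ℝ) ≤ (maxSet ω).card := by exact_mod_cast card_pos.mpr ⟨l, hl⟩
    have hratio : 1 ≤ t ^ count ω l / t ^ count ω j := by
      rw [one_le_div (by positivity)]
      exact pow_le_pow_right₀ ht (count_le_of_mem_maxSet hl j)
    exact mul_le_mul_of_nonneg_left (((div_le_one (by positivity)).mpr hcard).trans hratio) hp
  · rw [mul_zero]
    exact mul_nonneg hp (by positivity)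

lemma tilt_nonneg (hnn : ∀ j, 0 ≤ p j) (l j : Fin m) {t : ℝ} (ht : 0 ≤ t) (a : Fin m) :
    0 ≤ tilt p l j t a :=
  mul_nonneg (mul_nonneg (hnn a) (by split_ifs <;> simp [ht])) (by split_ifs <;> simp [ht])

lemma sum_tilt_eq {l j : Fin m} (hlj : l ≠ j) {t : ℝ} (ht : 0 < t) :
    ∑ a, tilt p l j t a = ∑ a, p a + (t - 1) * (p l - p j / t) := by
  have pointwise : ∀ a, tilt p l j t a =
      p a + (if a = l then p l * (t - 1) else 0) + (if a = j then p j * (t⁻¹ - 1) else 0) := by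
    intro a
    by_cases hal : a = l <;> by_cases haj : a = j <;> simp_all [tilt] <;> ring
  simp only [pointwise, sum_add_distrib, sum_ite_eq', mem_univ, if_true]
  field_simp
  ring

lemma exists_sum_tilt_lt_one (hnn : ∀ j, 0 ≤ p j) (hsum : ∑ a, p a = 1) {l j : Fin m}
    (hlt : p l < p j) : ∃ t, 1 ≤ t ∧ ∑ a, tilt p l j t a < 1 := by
  have hpos : 0 < p l + p j := by linarith [hnn l]
  set t := 2 * p j / (p l + p j)
  have ht : 1 < t := by rw [one_lt_div hpos]; linarith
  have hmid : p j / t = (p l + p j) / 2 := by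
    simp only [t]; field_simp; exact div_self ((hnn l).trans_lt hlt).ne'
  refine ⟨t, ht.le, ?_⟩
  rw [sum_tilt_eq (fun h => hlt.ne (congrArg p h)) (by linarith), hsum, hmid]
  nlinarith

lemma tendsto_majorityProb_zero_of_lt (hnn : ∀ j, 0 ≤ p j) (hsum : ∑ a, p a = 1)
    {l j : Fin m} (hlt : p l < p j) : Tendsto (fun N => majorityProb p N l) atTop (nhds 0) := by
  obtain ⟨t, ht, hlt_one⟩ := exists_sum_tilt_lt_one hnn hsum hlt
  have hc : 0 ≤ ∑ a, tilt p l j t a := sum_nonneg fun a _ => tilt_nonneg hnn l j (by linarith) a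
  exact squeeze_zero (majorityProb_nonneg hnn · l)
    (fun N => majorityProb_le_sum_tilt_pow hnn ht N l j)
    (tendsto_pow_atTop_nhds_zero_of_lt_one hc hlt_one)

end MajorityProb

/-- The probability that the majority-vote procedure returns one of the
most likely answers (the set `S = {j : p j = p_max}`) tends to `1` as `N → ∞`. -/
theorem returned_in_maxProb_set_tendsto_one {m : ℕ} (hm : 0 < m) (p : Fin m → ℝ)
    (hnn : ∀ j, 0 ≤ p j) (hsum : ∑ j, p j = 1)
    (S : Finset (Fin m)) (hS : S = Finset.univ.filter fun j => ∀ k, p k ≤ p j) :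
    Tendsto (fun N => ∑ l ∈ S, majorityProb p N l) atTop (nhds 1) := by
  have : NeZero m := ⟨hm.ne'⟩
  have hcompl : Tendsto (fun N => ∑ l ∈ Sᶜ, majorityProb p N l) atTop (nhds 0) := by
    rw [← sum_const_zero (s := Sᶜ)]
    refine tendsto_finsetSum _ fun l hl => ?_
    obtain ⟨k, hk⟩ : ∃ k, p l < p k := by simpa [hS] using hl
    exact tendsto_majorityProb_zero_of_lt hnn hsum hk
  have hsplit : ∀ N, ∑ l ∈ S, majorityProb p N l = 1 - ∑ l ∈ Sᶜ, majorityProb p N l :=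
    fun N => by
      rw [eq_sub_iff_add_eq, sum_add_sum_compl, sum_majorityProb, hsum, one_pow]
  simpa [hsplit] using (tendsto_const_nhds (x := (1 : ℝ))).sub hcompl
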